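/- arXiv:2203.16658 — 6 statements merged into one kernel-verified Lean document; each statement's English description precedes it below -/
import Mathlib

section
/- Let p > 2 be prime and S ⊆ (ℤ_p × ℤ_2) \ {(0,0)} with |S| = 5 such that exactly 3 elements of S have second coordinate 0 and exactly 2 have second coordinate 1. Then S has a sequencing: an ordering whose partial sums y_0,...,y_5 are distinct, except possibly y_5 = y_0 = 0. -/
/-- An ordering (list) is a *linear sequencing* if its partial sums
`y_0 = 0, y_1, ..., y_k` are pairwise distinct. -/
def IsLinSeq {G : Type*} [AddCommGroup G] (l : List G) : Prop :=
  Function.Injective (fun i : Fin (l.length + 1) => (l.take i.val).sum)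

/-- An ordering (list) is a *rotational sequencing* if its partial sums
`y_0 = 0, y_1, ..., y_k` are pairwise distinct except for `y_k = y_0 = 0`. -/
def IsRotSeq {G : Type*} [AddCommGroup G] (l : List G) : Prop :=
  l ≠ [] ∧ l.sum = 0 ∧
    Function.Injective (fun i : Fin l.length => (l.take i.val).sum)

/-- A finite subset is *sequenceable* if some ordering of its elements is a
linear or a rotational sequencing. -/
def Sequenceable {G : Type*} [AddCommGroup G] (S : Finset G) : Prop :=
  ∃ l : List G, l.Nodup ∧ (∀ x, x ∈ l ↔ x ∈ S) ∧ (IsLinSeq l ∨ IsRotSeq l)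

/-- A finite subset `S ⊆ G × H` has *type* `lam` if for each `h : H` exactly
`lam h` elements of `S` have second coordinate `h`. -/
def HasType {G H : Type*} (S : Finset (G × H)) (lam : H → ℕ) : Prop :=
  ∀ h : H, ({x ∈ (S : Set (G × H)) | x.2 = h}).ncard = lam h

/-!
Write `S = {(a,0), (b,0), (c,0), (d,1), (e,1)}`, `s = a + b + c` and `t = d + e`. After choosing
which of `a, b, c` is the middle element `y` of `{x, y, z}`, one of three orderings works:

* `x d y e z`, a rotational sequencing when `s + t = 0`, provided `x + z ≠ 0`;
* `d x y z e`, a linear sequencing when `s + t ≠ 0` and `s ≠ 0`, provided `x + y, y + z ≠ 0`;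
* `x d y e z`, a linear sequencing when `s = 0`, provided `x, z ≠ t` and `y ≠ -t`.

A suitable middle element always exists: as `a, b, c` are distinct, at most one of their pairwise
sums vanishes, at most one of them equals `t` and at most one equals `-t`. The last case also
needs `t ≠ -t`, which holds because `t = s + t ≠ 0` and `p` is odd.
-/

section
variable {G : Type*} [AddCommGroup G]

theorem isLinSeq_iff_nodup_scanl (l : List G) : IsLinSeq l ↔ (l.scanl (· + ·) 0).Nodup := by
  have hlen : l.length + 1 = (l.scanl (· + ·) 0).length := List.length_scanl.symm
  have hsums : (fun i : Fin (l.length + 1) => (l.take i).sum) =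
      (l.scanl (· + ·) 0).get ∘ finCongr hlen := by
    ext i
    simp [List.getElem_scanl, List.sum_eq_foldl]
  rw [List.nodup_iff_injective_get, IsLinSeq, hsums, Equiv.injective_comp]

theorem isRotSeq_iff_isLinSeq_dropLast (l : List G) :
    IsRotSeq l ↔ l ≠ [] ∧ l.sum = 0 ∧ IsLinSeq l.dropLast := by
  refine and_congr_right fun hl => and_congr_right fun _ => ?_
  have hlen : l.length = l.dropLast.length + 1 := by
    have := List.length_pos_iff.mpr hl
    rw [List.length_dropLast]
    omega
  have hsums : (fun i : Fin l.length => (l.take i).sum) =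
      (fun i : Fin (l.dropLast.length + 1) => (l.dropLast.take i).sum) ∘ finCongr hlen := by
    ext ⟨i, hi⟩
    simp [List.dropLast_eq_take, List.take_take, min_eq_left (Nat.le_sub_one_of_lt hi)]
  rw [IsLinSeq, hsums, Equiv.injective_comp]

theorem sequenceable_toFinset [DecidableEq G] {l : List G} (hl : l.Nodup)
    (h : IsLinSeq l ∨ IsRotSeq l) : Sequenceable l.toFinset :=
  ⟨l, hl, fun _ => List.mem_toFinset.symm, h⟩

end

section
variable {G : Type*} [DecidableEq G] {x y z d e : G}

def type32Set (x y z d e : G) : Finset (G × ZMod 2) := {(x, 0), (y, 0), (z, 0), (d, 1), (e, 1)}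

theorem type32Set_swap12 : type32Set x y z d e = type32Set y x z d e :=
  Finset.insert_comm _ _ _

theorem type32Set_swap23 : type32Set x y z d e = type32Set x z y d e :=
  congrArg (insert _) (Finset.insert_comm _ _ _)

end

section
variable {G : Type*} [AddCommGroup G] {x y z d e : G}

theorem isRotSeq_alternating (hσ : x + y + z + (d + e) = 0) (hx : x ≠ 0) (hy : y ≠ 0)
    (hz : z ≠ 0) (hxz : x + z ≠ 0) :
    IsRotSeq [((x, 0) : G × ZMod 2), (d, 1), (y, 0), (e, 1), (z, 0)] := by
  rw [isRotSeq_iff_isLinSeq_dropLast, isLinSeq_iff_nodup_scanl]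
  refine ⟨List.cons_ne_nil _ _, ?_, ?_⟩
  · simp only [List.sum_cons, List.sum_nil, add_zero, Prod.mk_add_mk, zero_add,
      CharTwo.add_self_eq_zero, Prod.ext_iff, Prod.fst_zero, Prod.snd_zero, and_true]
    grind
  · simp only [List.dropLast_cons_cons, List.dropLast_singleton, List.scanl_cons, zero_add,
      Prod.mk_add_mk, add_zero, CharTwo.add_self_eq_zero, List.scanl_nil, List.nodup_cons,
      List.mem_cons, Prod.ext_iff, Prod.fst_zero, Prod.snd_zero, and_true, zero_ne_one, and_false,
      List.not_mem_nil, or_false, false_or, not_or, left_eq_add, one_ne_zero, or_self,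
      not_false_eq_true, List.nodup_nil, and_self]
    grind

theorem isLinSeq_alternating (hxyz : x + y + z = 0) (ht : d + e ≠ 0) (hx : x ≠ 0) (hy : y ≠ 0)
    (hz : z ≠ 0) (hxt : x ≠ d + e) (hzt : z ≠ d + e) (hyt : y + (d + e) ≠ 0) :
    IsLinSeq [((x, 0) : G × ZMod 2), (d, 1), (y, 0), (e, 1), (z, 0)] := by
  rw [isLinSeq_iff_nodup_scanl]
  simp only [List.scanl_cons, zero_add, Prod.mk_add_mk, add_zero, CharTwo.add_self_eq_zero,
    List.scanl_nil, List.nodup_cons, List.mem_cons, Prod.ext_iff, Prod.fst_zero, Prod.snd_zero,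
    and_true, zero_ne_one, and_false, List.not_mem_nil, or_false, false_or, not_or, left_eq_add,
    one_ne_zero, or_self, not_false_eq_true, List.nodup_nil, and_self, true_and]
  grind

theorem isLinSeq_bracketed (hσ : x + y + z + (d + e) ≠ 0) (hx : x ≠ 0) (hy : y ≠ 0) (hz : z ≠ 0)
    (hxy : x + y ≠ 0) (hyz : y + z ≠ 0) (hxyz : x + y + z ≠ 0) :
    IsLinSeq [((d, 1) : G × ZMod 2), (x, 0), (y, 0), (z, 0), (e, 1)] := by
  rw [isLinSeq_iff_nodup_scanl]
  simp only [List.scanl_cons, zero_add, Prod.mk_add_mk, add_zero, CharTwo.add_self_eq_zero,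
    List.scanl_nil, List.nodup_cons, List.mem_cons, Prod.ext_iff, Prod.fst_zero, Prod.snd_zero,
    zero_ne_one, and_false, and_true, List.not_mem_nil, or_false, false_or, left_eq_add,
    one_ne_zero, or_self, not_or, not_false_eq_true, List.nodup_nil, and_self]
  grind

variable [DecidableEq G]

theorem sequenceable_of_alternating (hxy : x ≠ y) (hxz : x ≠ z) (hyz : y ≠ z) (hde : d ≠ e)
    (h : IsLinSeq [((x, 0) : G × ZMod 2), (d, 1), (y, 0), (e, 1), (z, 0)] ∨
      IsRotSeq [((x, 0) : G × ZMod 2), (d, 1), (y, 0), (e, 1), (z, 0)]) :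
    Sequenceable (type32Set x y z d e) := by
  have hset : [((x, 0) : G × ZMod 2), (d, 1), (y, 0), (e, 1), (z, 0)].toFinset =
      type32Set x y z d e := by
    ext
    simp only [List.toFinset_cons, List.toFinset_nil, insert_empty_eq, Finset.mem_insert,
      Finset.mem_singleton, type32Set]
    tauto
  rw [← hset]
  exact sequenceable_toFinset (by simp [hxy, hxz, hyz, hde]) h

theorem sequenceable_of_bracketed (hxy : x ≠ y) (hxz : x ≠ z) (hyz : y ≠ z) (hde : d ≠ e)
    (h : IsLinSeq [((d, 1) : G × ZMod 2), (x, 0), (y, 0), (z, 0), (e, 1)]) :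
    Sequenceable (type32Set x y z d e) := by
  have hset : [((d, 1) : G × ZMod 2), (x, 0), (y, 0), (z, 0), (e, 1)].toFinset =
      type32Set x y z d e := by
    ext
    simp only [List.toFinset_cons, List.toFinset_nil, insert_empty_eq, Finset.mem_insert,
      Finset.mem_singleton, type32Set]
    tauto
  rw [← hset]
  exact sequenceable_toFinset (by simp [hxy, hxz, hyz, hde]) (.inl h)

end

section
variable {G : Type*} [AddCommGroup G] [DecidableEq G] {a b c d e : G}

theorem sequenceable_type32Set_rotational (hσ : a + b + c + (d + e) = 0) (ha : a ≠ 0)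
    (hb : b ≠ 0) (hc : c ≠ 0) (hab : a ≠ b) (hac : a ≠ c) (hbc : b ≠ c) (hde : d ≠ e) :
    Sequenceable (type32Set a b c d e) := by
  by_cases hac0 : a + c = 0
  · have hab0 : a + b ≠ 0 := fun h => hbc (by grind)
    rw [type32Set_swap23]
    exact sequenceable_of_alternating hac hab hbc.symm hde
      (.inr (isRotSeq_alternating (by grind) ha hc hb hab0))
  · exact sequenceable_of_alternating hab hac hbc hde
      (.inr (isRotSeq_alternating hσ ha hb hc hac0))

theorem sequenceable_type32Set_bracketed (hσ : a + b + c + (d + e) ≠ 0)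
    (hs : a + b + c ≠ 0) (ha : a ≠ 0) (hb : b ≠ 0) (hc : c ≠ 0) (hab : a ≠ b) (hac : a ≠ c)
    (hbc : b ≠ c) (hde : d ≠ e) :
    Sequenceable (type32Set a b c d e) := by
  by_cases hab0 : a + b = 0
  · rw [type32Set_swap23]
    exact sequenceable_of_bracketed hac hab hbc.symm hde
      (isLinSeq_bracketed (by grind) ha hc hb (by grind) (by grind) (by grind))
  by_cases hbc0 : b + c = 0
  · rw [type32Set_swap12]
    exact sequenceable_of_bracketed hab.symm hbc hac hde
      (isLinSeq_bracketed (by grind) hb ha hc (by grind) (by grind) (by grind))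
  exact sequenceable_of_bracketed hab hac hbc hde (isLinSeq_bracketed hσ ha hb hc hab0 hbc0 hs)

theorem sequenceable_type32Set_alternating (hs : a + b + c = 0) (ht : d + e + (d + e) ≠ 0)
    (ha : a ≠ 0) (hb : b ≠ 0) (hc : c ≠ 0) (hab : a ≠ b) (hac : a ≠ c) (hbc : b ≠ c)
    (hde : d ≠ e) :
    Sequenceable (type32Set a b c d e) := by
  have ht₀ : d + e ≠ 0 := fun h => ht (by rw [h, add_zero])
  by_cases hat : a = d + e
  · rw [type32Set_swap12]
    exact sequenceable_of_alternating hab.symm hbc hac hde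
      (.inl (isLinSeq_alternating (by grind) ht₀ hb ha hc (by grind) (by grind) (by grind)))
  by_cases hct : c = d + e
  · rw [type32Set_swap23]
    exact sequenceable_of_alternating hac hab hbc.symm hde
      (.inl (isLinSeq_alternating (by grind) ht₀ ha hc hb hat (by grind) (by grind)))
  by_cases hbt : b + (d + e) = 0
  · rw [type32Set_swap12]
    exact sequenceable_of_alternating hab.symm hbc hac hde
      (.inl (isLinSeq_alternating (by grind) ht₀ hb ha hc (by grind) hct (by grind)))
  exact sequenceable_of_alternating hab hac hbc hde
    (.inl (isLinSeq_alternating hs ht₀ ha hb hc hat hct hbt))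

theorem sequenceable_type32Set (htwo : ∀ g : G, g + g = 0 → g = 0) (ha : a ≠ 0) (hb : b ≠ 0)
    (hc : c ≠ 0) (hab : a ≠ b) (hac : a ≠ c) (hbc : b ≠ c) (hde : d ≠ e) :
    Sequenceable (type32Set a b c d e) := by
  by_cases hσ : a + b + c + (d + e) = 0
  · exact sequenceable_type32Set_rotational hσ ha hb hc hab hac hbc hde
  by_cases hs : a + b + c = 0
  · refine sequenceable_type32Set_alternating hs (fun h => hσ ?_) ha hb hc hab hac hbc hde
    rw [hs, zero_add, htwo _ h]
  · exact sequenceable_type32Set_bracketed hσ hs ha hb hc hab hac hbc hde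

end

theorem Finset.coe_eq_fibre_zero_union_fibre_one {G : Type*} (S : Finset (G × ZMod 2)) :
    (S : Set (G × ZMod 2)) =
      {x ∈ (S : Set (G × ZMod 2)) | x.2 = 0} ∪ {x ∈ (S : Set (G × ZMod 2)) | x.2 = 1} := by
  have h01 : ∀ i : ZMod 2, i = 0 ∨ i = 1 := by decide
  ext x
  simp only [Set.mem_union, Set.mem_ofPred_eq, ← and_or_left, h01 x.2, and_true]

theorem sequenceable_of_ncard_fibres {G : Type*} [AddCommGroup G] [DecidableEq G]
    (htwo : ∀ g : G, g + g = 0 → g = 0) (S : Finset (G × ZMod 2))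
    (h0 : ((0, 0) : G × ZMod 2) ∉ S)
    (h3 : ({x ∈ (S : Set (G × ZMod 2)) | x.2 = 0}).ncard = 3)
    (h2 : ({x ∈ (S : Set (G × ZMod 2)) | x.2 = 1}).ncard = 2) :
    Sequenceable S := by
  obtain ⟨⟨a, i⟩, ⟨b, j⟩, ⟨c, k⟩, hab, hac, hbc, hS0⟩ := Set.ncard_eq_three.mp h3
  obtain ⟨⟨d, m⟩, ⟨e, n⟩, hde, hS1⟩ := Set.ncard_eq_two.mp h2
  obtain ⟨⟨ha, rfl⟩, ⟨hb, rfl⟩, ⟨hc, rfl⟩⟩ :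
      ((a, i) ∈ S ∧ i = 0) ∧ ((b, j) ∈ S ∧ j = 0) ∧ ((c, k) ∈ S ∧ k = 0) := by
    simpa [Set.insert_subset_iff] using hS0.symm.subset
  obtain ⟨⟨-, rfl⟩, ⟨-, rfl⟩⟩ : ((d, m) ∈ S ∧ m = 1) ∧ ((e, n) ∈ S ∧ n = 1) := by
    simpa [Set.insert_subset_iff] using hS1.symm.subset
  have hS : S = type32Set a b c d e := by
    apply Finset.coe_injective
    rw [Finset.coe_eq_fibre_zero_union_fibre_one, hS0, hS1, type32Set]
    push_cast
    simp only [Set.insert_union, Set.singleton_union]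
  rw [hS]
  exact sequenceable_type32Set htwo (by rintro rfl; exact h0 ha) (by rintro rfl; exact h0 hb)
    (by rintro rfl; exact h0 hc) (by rintro rfl; exact hab rfl) (by rintro rfl; exact hac rfl)
    (by rintro rfl; exact hbc rfl) (by rintro rfl; exact hde rfl)

theorem stmt_2_general (p : ℕ) (hp : p.Prime) (hp2 : 2 < p)
    (S : Finset (ZMod p × ZMod 2)) (h0 : ((0, 0) : ZMod p × ZMod 2) ∉ S)
    (h3 : ({x ∈ (S : Set (ZMod p × ZMod 2)) | x.2 = 0}).ncard = 3)
    (h2 : ({x ∈ (S : Set (ZMod p × ZMod 2)) | x.2 = 1}).ncard = 2) :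
    Sequenceable S :=
  sequenceable_of_ncard_fibres
    (fun _ => (ZMod.add_self_eq_zero_iff_eq_zero (hp.odd_of_ne_two hp2.ne')).mp) S h0 h3 h2

/-- Subsets of size 5 and type (3,2) of (ℤ_p × ℤ_2) minus {(0,0)} are
sequenceable for every odd prime p. -/
theorem stmt_2 (p : ℕ) (hp : p.Prime) (hp2 : 2 < p)
    (S : Finset (ZMod p × ZMod 2)) (h0 : ((0, 0) : ZMod p × ZMod 2) ∉ S)
    (hcard : S.card = 5)
    (h3 : ({x ∈ (S : Set (ZMod p × ZMod 2)) | x.2 = 0}).ncard = 3)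
    (h2 : ({x ∈ (S : Set (ZMod p × ZMod 2)) | x.2 = 1}).ncard = 2) :
    Sequenceable S :=
  stmt_2_general p hp hp2 S h0 h3 h2
end

section
/- Let p > 2 be prime. Every subset S of ℤ_{2p} \ {0} of size 5 containing exactly 3 even elements is sequenceable. -/
/-!
Call the even elements (those of the index-two subgroup) `a, b, c` and the odd ones `u, v`.
A list is a linear sequencing iff none of its consecutive blocks sums to `0`, and a block
containing exactly one odd element is odd, hence nonzero. If `a + b + c ≠ 0`, order the evens
so that `a + b ≠ 0 ≠ b + c` (at most one pair of them sums to `0`) and take `[u, a, b, c, v]`;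
if `a + b + c = 0`, take `[a, u, b, v, c]` with the middle even `b` chosen so that
`u + v ∉ {a, c, -b}`, which is possible because no nonzero even element has order two.
Either way every block other than the whole list has nonzero sum, so the list is a linear
sequencing when its total sum is nonzero and a rotational one otherwise.
-/

theorem List.mem_inits_dropLast {α : Type*} {s l : List α} (hs : s ∈ l.inits) (hsl : s ≠ l) :
    s ∈ l.dropLast.inits := by
  rw [List.mem_inits] at hs ⊢
  have hlt : s.length < l.length :=
    lt_of_le_of_ne hs.length_le fun h => hsl (hs.eq_of_length h)
  exact List.prefix_of_prefix_length_le hs l.dropLast_prefix (by simp; omega)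

section Sequencing

variable {G : Type*} [AddCommGroup G]

theorem isLinSeq_nil : IsLinSeq ([] : List G) :=
  fun i j _ => Subsingleton.elim (α := Fin 1) i j

theorem isLinSeq_cons {x : G} {l : List G} :
    IsLinSeq (x :: l) ↔ (∀ s ∈ l.inits, x + s.sum ≠ 0) ∧ IsLinSeq l := by
  have hsums : (fun i : Fin (l.length + 2) => ((x :: l).take i).sum) =
      Fin.cons 0 (fun j : Fin (l.length + 1) => x + (l.take j).sum) := by
    funext i
    cases i using Fin.cases <;> simp
  have hinits : (∀ s ∈ l.inits, x + s.sum ≠ 0) ↔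
      ∀ j : Fin (l.length + 1), x + (l.take j).sum ≠ 0 := by
    simp only [List.mem_inits]
    refine ⟨fun h j => h _ (List.take_prefix _ _), fun h s hs => ?_⟩
    rw [List.prefix_iff_eq_take.mp hs]
    exact h ⟨s.length, Nat.lt_succ_of_le hs.length_le⟩
  rw [IsLinSeq, IsLinSeq, List.length_cons, hsums, Fin.cons_injective_iff, hinits]
  exact and_congr (by simp [Set.mem_range])
    ((add_right_injective x).of_comp_iff fun j : Fin (l.length + 1) => (l.take j).sum)

theorem isLinSeq_four {a b c d : G} :
    IsLinSeq [a, b, c, d] ↔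
      (a ≠ 0 ∧ a + b ≠ 0 ∧ a + b + c ≠ 0 ∧ a + b + c + d ≠ 0) ∧
      (b ≠ 0 ∧ b + c ≠ 0 ∧ b + c + d ≠ 0) ∧ (c ≠ 0 ∧ c + d ≠ 0) ∧ d ≠ 0 := by
  simp only [isLinSeq_cons, List.inits, List.map_cons, List.map_nil, List.forall_mem_cons,
    List.sum_cons, List.sum_nil, add_zero, ← add_assoc, List.not_mem_nil, IsEmpty.forall_iff,
    implies_true, isLinSeq_nil, and_true]

theorem isRotSeq_iff {l : List G} :
    IsRotSeq l ↔ l ≠ [] ∧ l.sum = 0 ∧ IsLinSeq l.dropLast := by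
  refine and_congr_right fun hl => and_congr_right fun _ => ?_
  have hlen : l.dropLast.length + 1 = l.length := by
    rw [List.length_dropLast]; have := List.length_pos_iff.mpr hl; omega
  rw [IsLinSeq, ← (finCongr hlen).symm.injective_comp]
  congr! with i
  have hi : i.val ≤ l.length - 1 := by omega
  simp [List.dropLast_eq_take, List.take_take, hi]

/-- Every window sum of `l` other than `l.sum` itself is a window sum of `l.dropLast` or of
`l.tail`; the total sum decides between a linear and a rotational sequencing. -/
theorem isLinSeq_or_isRotSeq {l : List G} (hl : l ≠ []) (hinit : IsLinSeq l.dropLast)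
    (htail : IsLinSeq l.tail) : IsLinSeq l ∨ IsRotSeq l := by
  by_cases hsum : l.sum = 0
  · exact .inr (isRotSeq_iff.mpr ⟨hl, hsum, hinit⟩)
  obtain ⟨x, l, rfl⟩ := List.exists_cons_of_ne_nil hl
  refine .inl (isLinSeq_cons.mpr ⟨fun s hs => ?_, htail⟩)
  by_cases hsl : s = l
  · simpa [hsl] using hsum
  have hne : l ≠ [] := by rintro rfl; simp_all
  rw [List.dropLast_cons_of_ne_nil hne, isLinSeq_cons] at hinit
  exact hinit.1 s (List.mem_inits_dropLast hs hsl)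

theorem Sequenceable.of_length_eq_card {l : List G} {S : Finset G}
    (hmem : ∀ x, x ∈ l ↔ x ∈ S) (hlen : l.length = S.card) (h : IsLinSeq l ∨ IsRotSeq l) :
    Sequenceable S := by
  classical
  have hS : l.toFinset = S := Finset.ext fun x => by simp [hmem]
  refine ⟨l, Multiset.coe_nodup.mp (Multiset.toFinset_card_eq_card_iff_nodup.mp ?_), hmem, h⟩
  change l.toFinset.card = l.length
  rw [hS, hlen]

end Sequencing

section Parity

variable {G : Type*} [AddCommGroup G] (f : G →+ ZMod 2)

theorem ne_zero_of_map_eq_one {x : G} (hx : f x = 1) : x ≠ 0 := by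
  rintro rfl
  simp at hx

variable {a b c u v : G}

theorem isLinSeq_or_isRotSeq_odd_evens_odd (hu : f u = 1) (hv : f v = 1) (ha : f a = 0)
    (hb : f b = 0) (hc : f c = 0) (ha0 : a ≠ 0) (hb0 : b ≠ 0) (hc0 : c ≠ 0)
    (hab : a + b ≠ 0) (hbc : b + c ≠ 0) (habc : a + b + c ≠ 0) :
    IsLinSeq [u, a, b, c, v] ∨ IsRotSeq [u, a, b, c, v] := by
  have odd : ∀ x, f x = 1 → x ≠ 0 := fun _ => ne_zero_of_map_eq_one f
  refine isLinSeq_or_isRotSeq (List.cons_ne_nil _ _)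
    (isLinSeq_four.mpr
      ⟨⟨odd _ ?_, odd _ ?_, odd _ ?_, odd _ ?_⟩, ⟨ha0, hab, habc⟩, ⟨hb0, hbc⟩, hc0⟩)
    (isLinSeq_four.mpr
      ⟨⟨ha0, hab, habc, odd _ ?_⟩, ⟨hb0, hbc, odd _ ?_⟩, ⟨hc0, odd _ ?_⟩, odd _ hv⟩)
  -- each remaining block contains exactly one of `u`, `v`
  all_goals simp [hu, hv, ha, hb, hc]

theorem isLinSeq_or_isRotSeq_alternating (hu : f u = 1) (hv : f v = 1) (ha : f a = 0)
    (hb : f b = 0) (hc : f c = 0) (ha0 : a ≠ 0) (hb0 : b ≠ 0) (hc0 : c ≠ 0)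
    (habc : a + b + c = 0) (hua : u + v ≠ a) (hub : u + v + b ≠ 0) (huc : u + v ≠ c) :
    IsLinSeq [a, u, b, v, c] ∨ IsRotSeq [a, u, b, v, c] := by
  have odd : ∀ x, f x = 1 → x ≠ 0 := fun _ => ne_zero_of_map_eq_one f
  have hubv : u + b + v ≠ 0 := by rwa [add_right_comm]
  have haubv : a + u + b + v ≠ 0 := by
    rwa [show a + u + b + v = u + v - c by linear_combination (norm := abel) habc, sub_ne_zero]
  have hubvc : u + b + v + c ≠ 0 := by
    rwa [show u + b + v + c = u + v - a by linear_combination (norm := abel) habc, sub_ne_zero]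
  refine isLinSeq_or_isRotSeq (List.cons_ne_nil _ _)
    (isLinSeq_four.mpr ⟨⟨ha0, odd _ ?_, odd _ ?_, haubv⟩, ⟨odd _ hu, odd _ ?_, hubv⟩,
      ⟨hb0, odd _ ?_⟩, odd _ hv⟩)
    (isLinSeq_four.mpr ⟨⟨odd _ hu, odd _ ?_, hubv, hubvc⟩, ⟨hb0, odd _ ?_, odd _ ?_⟩,
      ⟨odd _ hv, odd _ ?_⟩, hc0⟩)
  all_goals simp [hu, hv, ha, hb, hc]

theorem sequenceable_of_sum_ne_zero {S : Finset G}
    (hS : ∀ x, x ∈ S ↔ x = a ∨ x = b ∨ x = c ∨ x = u ∨ x = v) (hcard : S.card = 5)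
    (hu : f u = 1) (hv : f v = 1) (ha : f a = 0) (hb : f b = 0) (hc : f c = 0)
    (hab : a ≠ b) (hac : a ≠ c) (hbc : b ≠ c) (ha0 : a ≠ 0) (hb0 : b ≠ 0) (hc0 : c ≠ 0)
    (habc : a + b + c ≠ 0) : Sequenceable S := by
  by_cases hab' : a + b = 0
  · refine .of_length_eq_card (l := [u, a, c, b, v]) (fun x => by simp [hS]; tauto) hcard.symm
      (isLinSeq_or_isRotSeq_odd_evens_odd f hu hv ha hc hb ha0 hc0 hb0 ?_ ?_
        (by rwa [add_right_comm]))
    · exact fun h => hbc (add_left_cancel (hab'.trans h.symm))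
    · exact fun h => hac (add_right_cancel (hab'.trans h.symm))
  by_cases hbc' : b + c = 0
  · refine .of_length_eq_card (l := [u, b, a, c, v]) (fun x => by simp [hS]; tauto) hcard.symm
      (isLinSeq_or_isRotSeq_odd_evens_odd f hu hv hb ha hc hb0 ha0 hc0 (by rwa [add_comm])
        (fun h => hab (add_right_cancel (h.trans hbc'.symm))) (by rwa [add_comm b a]))
  exact .of_length_eq_card (l := [u, a, b, c, v]) (fun x => by simp [hS]; tauto) hcard.symm
    (isLinSeq_or_isRotSeq_odd_evens_odd f hu hv ha hb hc ha0 hb0 hc0 hab' hbc' habc)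

theorem sequenceable_of_sum_eq_zero (hf : ∀ x, f x = 0 → x + x = 0 → x = 0) {S : Finset G}
    (hS : ∀ x, x ∈ S ↔ x = a ∨ x = b ∨ x = c ∨ x = u ∨ x = v) (hcard : S.card = 5)
    (hu : f u = 1) (hv : f v = 1) (ha : f a = 0) (hb : f b = 0) (hc : f c = 0)
    (hab : a ≠ b) (hac : a ≠ c) (hbc : b ≠ c) (ha0 : a ≠ 0) (hb0 : b ≠ 0) (hc0 : c ≠ 0)
    (habc : a + b + c = 0) : Sequenceable S := by
  by_cases hua : u + v = a
  · refine .of_length_eq_card (l := [b, u, a, v, c]) (fun x => by simp [hS]; tauto) hcard.symm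
      (isLinSeq_or_isRotSeq_alternating f hu hv hb ha hc hb0 ha0 hc0
        (by rwa [add_comm b a]) ?_ ?_ ?_) <;> rw [hua]
    exacts [hab, fun h => ha0 (hf a ha h), hac]
  by_cases huc : u + v = c
  · refine .of_length_eq_card (l := [a, u, c, v, b]) (fun x => by simp [hS]; tauto) hcard.symm
      (isLinSeq_or_isRotSeq_alternating f hu hv ha hc hb ha0 hc0 hb0
        (by rwa [add_right_comm]) hua ?_ ?_) <;> rw [huc]
    exacts [fun h => hc0 (hf c hc h), hbc.symm]
  by_cases hub : u + v + b = 0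
  · exact .of_length_eq_card (l := [a, u, c, v, b]) (fun x => by simp [hS]; tauto) hcard.symm
      (isLinSeq_or_isRotSeq_alternating f hu hv ha hc hb ha0 hc0 hb0
        (by rwa [add_right_comm]) hua (fun h => hbc (add_left_cancel (hub.trans h.symm)))
        (fun h => hb0 (hf b hb (h ▸ hub))))
  exact .of_length_eq_card (l := [a, u, b, v, c]) (fun x => by simp [hS]; tauto) hcard.symm
    (isLinSeq_or_isRotSeq_alternating f hu hv ha hb hc ha0 hb0 hc0 habc hua hub huc)

end Parity

theorem sequenceable_of_card_eq_five_of_three_even {G : Type*} [AddCommGroup G]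
    (f : G →+ ZMod 2) (hf : ∀ x, f x = 0 → x + x = 0 → x = 0) {S : Finset G} (h0 : 0 ∉ S)
    (hcard : S.card = 5) (heven : (S.filter fun x => f x = 0).card = 3) : Sequenceable S := by
  classical
  obtain ⟨a, b, c, hab, hac, hbc, hE⟩ := Finset.card_eq_three.mp heven
  have hodd : (S.filter fun x => ¬f x = 0).card = 2 := by
    have := S.card_filter_add_card_filter_not (fun x => f x = 0)
    omega
  obtain ⟨u, v, -, hO⟩ := Finset.card_eq_two.mp hodd
  have hS : ∀ x, x ∈ S ↔ x = a ∨ x = b ∨ x = c ∨ x = u ∨ x = v := by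
    intro x
    rw [← S.filter_union_filter_not_eq (fun x => f x = 0), hE, hO]
    simp only [Finset.mem_union, Finset.mem_insert, Finset.mem_singleton]
    tauto
  have hevens : ∀ x ∈ ({a, b, c} : Finset G), x ≠ 0 ∧ f x = 0 := by
    rw [← hE]
    exact fun x hx => ⟨ne_of_mem_of_not_mem (Finset.mem_filter.mp hx).1 h0,
      (Finset.mem_filter.mp hx).2⟩
  have hodds : ∀ x ∈ ({u, v} : Finset G), f x = 1 := by
    rw [← hO]
    exact fun x hx => Fin.eq_one_of_ne_zero _ (Finset.mem_filter.mp hx).2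
  simp only [Finset.mem_insert, Finset.mem_singleton, forall_eq_or_imp, forall_eq] at hevens hodds
  obtain ⟨⟨ha0, ha⟩, ⟨hb0, hb⟩, ⟨hc0, hc⟩⟩ := hevens
  obtain ⟨hu, hv⟩ := hodds
  by_cases habc : a + b + c = 0
  · exact sequenceable_of_sum_eq_zero f hf hS hcard hu hv ha hb hc hab hac hbc ha0 hb0 hc0 habc
  · exact sequenceable_of_sum_ne_zero f hS hcard hu hv ha hb hc hab hac hbc ha0 hb0 hc0 habc

theorem ZMod.exists_eq_add_self_iff {n : ℕ} (x : ZMod (2 * n)) :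
    (∃ y, x = y + y) ↔ ZMod.castHom (dvd_mul_right 2 n) (ZMod 2) x = 0 := by
  constructor
  · rintro ⟨y, rfl⟩
    rw [map_add]
    exact CharTwo.add_self_eq_zero _
  · obtain ⟨k, rfl⟩ := ZMod.intCast_surjective x
    rw [map_intCast, ZMod.intCast_eq_zero_iff_even]
    rintro ⟨m, rfl⟩
    exact ⟨m, by push_cast; rfl⟩

/-- In `ℤ/2n` with `n` odd the only element of order two is `n`, which is odd. -/
theorem ZMod.eq_zero_of_add_self_eq_zero {n : ℕ} (hn : Odd n) {x : ZMod (2 * n)}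
    (hx : ZMod.castHom (dvd_mul_right 2 n) (ZMod 2) x = 0) (h : x + x = 0) : x = 0 := by
  have : NeZero (2 * n) := ⟨by have := hn.pos; omega⟩
  refine ((ZMod.neg_eq_self_iff x).mp (neg_eq_of_add_eq_zero_left h)).resolve_right fun h2 => ?_
  rw [← ZMod.natCast_zmod_val x, show x.val = n by omega, map_natCast,
    ZMod.natCast_eq_zero_iff_even] at hx
  exact Nat.not_even_iff_odd.mpr hn hx

/-- Every subset of ℤ_{2p} minus {0} of size 5 with exactly 3 even elements is
sequenceable, for every odd prime p. -/
theorem stmt_3 (p : ℕ) (hp : p.Prime) (hp2 : 2 < p)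
    (S : Finset (ZMod (2 * p))) (h0 : (0 : ZMod (2 * p)) ∉ S)
    (hcard : S.card = 5)
    (heven : ({x ∈ (S : Set (ZMod (2 * p))) | ∃ y, x = y + y}).ncard = 3) :
    Sequenceable S := by
  let f := (ZMod.castHom (dvd_mul_right 2 p) (ZMod 2)).toAddMonoidHom
  have hodd : Odd p := hp.odd_of_ne_two hp2.ne'
  refine sequenceable_of_card_eq_five_of_three_even f
    (fun x => ZMod.eq_zero_of_add_self_eq_zero hodd) h0 hcard ?_
  rw [← heven, ← Set.ncard_coe_finset, Finset.coe_filter]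
  simp_rw [ZMod.exists_eq_add_self_iff]
  rfl
end

section
/- The integers a = -18128730243333160 and b = -46383022877233608 have no common odd prime factor; hence for every odd prime p, at least one of a, b is nonzero modulo p. -/
theorem Int.not_prime_dvd_and_dvd_of_gcd_eq_two_pow {p : ℕ} (hp : p.Prime) (hodd : Odd p)
    {a b : ℤ} {k : ℕ} (hgcd : Int.gcd a b = 2 ^ k) : ¬ ((p : ℤ) ∣ a ∧ (p : ℤ) ∣ b) := by
  rintro ⟨ha, hb⟩
  have hdvd : p ∣ 2 ^ k := by
    rw [← hgcd]
    exact Int.dvd_gcd ha hb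
  have hp2 : p = 2 := (Nat.prime_dvd_prime_iff_eq hp Nat.prime_two).mp (hp.dvd_of_dvd_pow hdvd)
  subst hp2
  exact Nat.not_odd_iff_even.mpr even_two hodd

theorem ZMod.intCast_ne_zero_or_intCast_ne_zero {p : ℕ} {a b : ℤ}
    (h : ¬ ((p : ℤ) ∣ a ∧ (p : ℤ) ∣ b)) : (a : ZMod p) ≠ 0 ∨ (b : ZMod p) ≠ 0 := by
  simp only [ne_eq, ZMod.intCast_zmod_eq_zero_iff_dvd]
  tauto

/-- The two coefficients have no common odd prime factor; hence for every odd
prime p at least one of them is nonzero modulo p. -/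
theorem stmt_7 (p : ℕ) (hp : p.Prime) (hodd : Odd p) :
    (¬ ((p : ℤ) ∣ -18128730243333160 ∧ (p : ℤ) ∣ -46383022877233608)) ∧
    ((-18128730243333160 : ZMod p) ≠ 0 ∨ (-46383022877233608 : ZMod p) ≠ 0) := by
  have hgcd : Int.gcd (-18128730243333160) (-46383022877233608) = 2 ^ 3 := by norm_num
  have hcoprime := Int.not_prime_dvd_and_dvd_of_gcd_eq_two_pow hp hodd hgcd
  exact ⟨hcoprime, by exact_mod_cast ZMod.intCast_ne_zero_or_intCast_ne_zero hcoprime⟩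
end

section
/- (Change of group lemma) Let G_1 and G_2 be abelian groups and let S ⊆ G_1 \ {0} be a finite subset with ΣS ≠ 0, of size k. Define Υ(S) = S ∪ Δ(S) ∪ {ΣS}, where Δ(S) = {a − b : a, b ∈ S, a ≠ b}. Suppose φ : G_1 → G_2 is a group homomorphism with ker(φ) ∩ Υ(S) = ∅. Then φ(S) is a subset of G_2 \ {0} of size k with Σφ(S) ≠ 0, and if φ(S) is sequenceable then S is sequenceable. -/
/-!
A homomorphism that kills no difference of two elements of `S` is injective on `S`, so
`φ(S)` has the size of `S`, and the sum of `φ(S)` is `φ(ΣS) ≠ 0`. Since the last partial sum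
of any ordering is the total sum, a sequencing of `φ(S)` must be linear. Lifting it
elementwise to `S`, the partial sums of the lift map onto those of the original under `φ`,
so they are pairwise distinct as well.
-/

open Finset

lemma AddMonoidHom.injOn_of_map_sub_ne_zero {G H : Type*} [AddGroup G] [AddGroup H]
    (φ : G →+ H) {S : Set G} (h : ∀ a ∈ S, ∀ b ∈ S, a ≠ b → φ (a - b) ≠ 0) :
    Set.InjOn φ S := by
  intro a ha b hb hab
  by_contra hne
  exact h a ha b hb hne (by rw [map_sub, hab, sub_self])

lemma List.exists_map_eq_of_injOn {α β : Type*} [DecidableEq β] {f : α → β} {S : Finset α}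
    (hf : Set.InjOn f S) {l' : List β} (hmem : ∀ y, y ∈ l' ↔ y ∈ S.image f) :
    ∃ l : List α, (∀ x, x ∈ l ↔ x ∈ S) ∧ l.map f = l' := by
  have hpre : ∀ y ∈ l', ∃ x ∈ S, f x = y := fun y hy => mem_image.mp ((hmem y).mp hy)
  refine ⟨l'.pmap (fun y hy => Classical.choose hy) hpre, fun x => ?_, ?_⟩
  · simp only [List.mem_pmap]
    constructor
    · rintro ⟨y, hy, rfl⟩
      exact (Classical.choose_spec (hpre y hy)).1
    · intro hx
      have hfx : f x ∈ l' := (hmem _).mpr (mem_image_of_mem f hx)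
      have hspec := Classical.choose_spec (hpre _ hfx)
      exact ⟨f x, hfx, hf hspec.1 hx hspec.2⟩
  · rw [List.map_pmap, List.pmap_eq_self]
    exact fun y hy => (Classical.choose_spec (hpre y hy)).2

lemma List.sum_eq_finset_sum_of_nodup {M : Type*} [AddCommMonoid M] [DecidableEq M]
    {l : List M} {T : Finset M} (hl : l.Nodup) (hmem : ∀ x, x ∈ l ↔ x ∈ T) :
    l.sum = ∑ x ∈ T, x := by
  have hT : l.toFinset = T := Finset.ext fun x => by rw [List.mem_toFinset, hmem]
  rw [← hT, List.sum_toFinset _ hl, List.map_id']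

section Sequencing

variable {G H : Type*} [AddCommGroup G] [AddCommGroup H]

lemma IsLinSeq.of_map (f : G →+ H) {l : List G} (h : IsLinSeq (l.map f)) : IsLinSeq l := by
  intro i j hij
  have hlen : (l.map f).length + 1 = l.length + 1 := by rw [List.length_map]
  have himg : ((l.map f).take (Fin.cast hlen.symm i).val).sum
      = ((l.map f).take (Fin.cast hlen.symm j).val).sum := by
    simp only [Fin.val_cast, ← List.map_take, ← map_list_sum, hij]
  simpa using h himg

lemma Sequenceable.exists_isLinSeq [DecidableEq G] {T : Finset G} (hT : ∑ x ∈ T, x ≠ 0)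
    (h : Sequenceable T) : ∃ l : List G, l.Nodup ∧ (∀ x, x ∈ l ↔ x ∈ T) ∧ IsLinSeq l := by
  obtain ⟨l, hnd, hmem, hlin | hrot⟩ := h
  · exact ⟨l, hnd, hmem, hlin⟩
  · exact absurd (List.sum_eq_finset_sum_of_nodup hnd hmem ▸ hrot.2.1) hT

lemma Sequenceable.of_image [DecidableEq H] {φ : G →+ H} {S : Finset G} (hφ : Set.InjOn φ S)
    (hsum : ∑ y ∈ S.image φ, y ≠ 0) (h : Sequenceable (S.image φ)) : Sequenceable S := by
  obtain ⟨l', hnd', hmem', hlin'⟩ := h.exists_isLinSeq hsum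
  obtain ⟨l, hmem, rfl⟩ := List.exists_map_eq_of_injOn hφ hmem'
  exact ⟨l, hnd'.of_map φ, hmem, .inl (hlin'.of_map φ)⟩

end Sequencing

theorem stmt_8_general {G₁ G₂ : Type*} [AddCommGroup G₁] [AddCommGroup G₂]
    [DecidableEq G₂]
    (S : Finset G₁)
    (φ : G₁ →+ G₂)
    (hker : ∀ x : G₁,
      (x ∈ S ∨ (∃ a ∈ S, ∃ b ∈ S, a ≠ b ∧ x = a - b) ∨ x = ∑ y ∈ S, y) →
      φ x ≠ 0) :
    (0 : G₂) ∉ S.image φ ∧ (S.image φ).card = S.card ∧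
      (∑ y ∈ S.image φ, y) ≠ 0 ∧
      (Sequenceable (S.image φ) → Sequenceable S) := by
  have hinj : Set.InjOn φ S := φ.injOn_of_map_sub_ne_zero fun a ha b hb hab =>
    hker _ (.inr (.inl ⟨a, ha, b, hb, hab, rfl⟩))
  have hsum : ∑ y ∈ S.image φ, y ≠ 0 := by
    rw [sum_image fun a ha b hb => hinj ha hb, ← map_sum]
    exact hker _ (.inr (.inr rfl))
  refine ⟨fun h0 => ?_, card_image_of_injOn hinj, hsum, Sequenceable.of_image hinj hsum⟩
  obtain ⟨x, hx, hx0⟩ := mem_image.mp h0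
  exact hker x (.inl hx) hx0

/-- Change of group lemma: if a homomorphism φ has kernel disjoint from
Υ(S) = S ∪ Δ(S) ∪ {ΣS}, then φ(S) avoids 0, has the same size, has nonzero
sum, and sequenceability of φ(S) implies that of S. -/
theorem stmt_8 {G₁ G₂ : Type*} [AddCommGroup G₁] [AddCommGroup G₂]
    [DecidableEq G₂]
    (S : Finset G₁) (h0 : (0 : G₁) ∉ S) (hsum : (∑ x ∈ S, x) ≠ 0)
    (φ : G₁ →+ G₂)
    (hker : ∀ x : G₁,
      (x ∈ S ∨ (∃ a ∈ S, ∃ b ∈ S, a ≠ b ∧ x = a - b) ∨ x = ∑ y ∈ S, y) →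
      φ x ≠ 0) :
    (0 : G₂) ∉ S.image φ ∧ (S.image φ).card = S.card ∧
      (∑ y ∈ S.image φ, y) ≠ 0 ∧
      (Sequenceable (S.image φ) → Sequenceable S) :=
  stmt_8_general S φ hker
end

section
/- Let H be a finite abelian group and λ a type. Suppose that for infinitely many primes p, every non-zero-sum subset of (ℤ_p × H) \ {0} of type λ is sequenceable. Then every non-zero-sum subset of (G × H) \ {0} of type λ is sequenceable, for every torsion-free abelian group G. -/
open Polynomial Set

section SubsetSums

variable {M : Type*} [AddCommMonoid M]

def subsetSums (S : Finset M) : Set M := {a | ∃ U ⊆ S, ∑ x ∈ U, x = a}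

theorem subsetSums_finite (S : Finset M) : (subsetSums S).Finite :=
  (S.powerset.finite_toSet.image fun U => ∑ x ∈ U, x).subset
    fun _ ⟨U, hU, hUa⟩ => ⟨U, Finset.mem_powerset.2 hU, hUa⟩

theorem zero_mem_subsetSums (S : Finset M) : 0 ∈ subsetSums S :=
  ⟨∅, Finset.empty_subset S, Finset.sum_empty⟩

theorem mem_subsetSums_of_mem {S : Finset M} {x : M} (hx : x ∈ S) : x ∈ subsetSums S :=
  ⟨{x}, Finset.singleton_subset_iff.2 hx, Finset.sum_singleton _ _⟩

theorem sum_mem_subsetSums (S : Finset M) : ∑ x ∈ S, x ∈ subsetSums S :=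
  ⟨S, subset_rfl, rfl⟩

theorem List.sum_mem_subsetSums {S : Finset M} {l : List M} (hl : l.Nodup)
    (hS : ∀ x ∈ l, x ∈ S) : l.sum ∈ subsetSums S := by
  classical
  exact ⟨l.toFinset, fun x hx => hS x (List.mem_toFinset.1 hx), by
    simpa using List.sum_toFinset id hl⟩

theorem List.sum_take_mem_subsetSums {S : Finset M} {l : List M} (hl : l.Nodup)
    (hS : ∀ x ∈ l, x ∈ S) (i : ℕ) : (l.take i).sum ∈ subsetSums S :=
  List.sum_mem_subsetSums ((l.take_sublist i).nodup hl)
    fun x hx => hS x ((l.take_sublist i).subset hx)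

end SubsetSums

section Transfer

variable {M N : Type*} [AddCommGroup M] [AddCommGroup N]

theorem injective_fin_iff_injOn {α : Type*} (g : ℕ → α) (n : ℕ) :
    Function.Injective (fun i : Fin n => g i) ↔ InjOn g (Iio n) :=
  ⟨fun h a ha b hb hab => congrArg Fin.val (@h ⟨a, ha⟩ ⟨b, hb⟩ hab),
    fun h a b hab => Fin.ext (h a.2 b.2 hab)⟩

theorem isLinSeq_iff_injOn (l : List M) :
    IsLinSeq l ↔ InjOn (fun i => (l.take i).sum) (Iio (l.length + 1)) :=
  injective_fin_iff_injOn (fun i => (l.take i).sum) _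

theorem isRotSeq_iff_injOn (l : List M) :
    IsRotSeq l ↔ l ≠ [] ∧ l.sum = 0 ∧ InjOn (fun i => (l.take i).sum) (Iio l.length) := by
  rw [IsRotSeq, injective_fin_iff_injOn (fun i => (l.take i).sum)]

theorem sum_take_map (f : M →+ N) (l : List M) (i : ℕ) :
    ((l.map f).take i).sum = f (l.take i).sum := by
  rw [← List.map_take, map_list_sum]

variable {f : M →+ N} {P : Set M} {l : List M}

theorem isLinSeq_map_iff (hf : InjOn f P) (hl : ∀ i, (l.take i).sum ∈ P) :
    IsLinSeq (l.map f) ↔ IsLinSeq l := by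
  simp only [isLinSeq_iff_injOn, List.length_map, sum_take_map]
  exact ⟨InjOn.of_comp, fun h => hf.comp h fun i _ => hl i⟩

theorem isRotSeq_map_iff (hf : InjOn f P) (hl : ∀ i, (l.take i).sum ∈ P) :
    IsRotSeq (l.map f) ↔ IsRotSeq l := by
  have hsum : f l.sum = 0 ↔ l.sum = 0 := by
    rw [← map_zero f]
    exact hf.eq_iff (by simpa using hl l.length) (by simpa using hl 0)
  simp only [isRotSeq_iff_injOn, List.length_map, sum_take_map, ne_eq, List.map_eq_nil_iff,
    ← map_list_sum, hsum]
  exact and_congr_right' <| and_congr_right' ⟨InjOn.of_comp, fun h => hf.comp h fun i _ => hl i⟩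

theorem sequenceable_image_iff [DecidableEq N] {S : Finset M} (hf : InjOn f (subsetSums S)) :
    Sequenceable (S.image f) ↔ Sequenceable S := by
  have hfS : InjOn f S := hf.mono fun _ => mem_subsetSums_of_mem
  have hseq {l : List M} (hl : l.Nodup) (hS : ∀ x ∈ l, x ∈ S) :
      (IsLinSeq (l.map f) ∨ IsRotSeq (l.map f)) ↔ (IsLinSeq l ∨ IsRotSeq l) :=
    or_congr (isLinSeq_map_iff hf (List.sum_take_mem_subsetSums hl hS))
      (isRotSeq_map_iff hf (List.sum_take_mem_subsetSums hl hS))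
  constructor
  · rintro ⟨l', hnd', hmem', hseq'⟩
    obtain ⟨l, hlS, rfl⟩ : ∃ l : List M, (∀ x ∈ l, x ∈ S) ∧ l.map f = l' := by
      obtain ⟨l, hl⟩ : l' ∈ range (List.map fun x : S => f x) := by
        rw [range_list_map]
        intro y hy
        obtain ⟨x, hx, rfl⟩ := Finset.mem_image.1 ((hmem' y).1 hy)
        exact ⟨⟨x, hx⟩, rfl⟩
      refine ⟨l.map Subtype.val, fun x hx => ?_, by rw [List.map_map]; exact hl⟩
      obtain ⟨y, -, rfl⟩ := List.mem_map.1 hx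
      exact y.2
    refine ⟨l, hnd'.of_map f, fun x => ⟨hlS x, fun hx => ?_⟩, (hseq (hnd'.of_map f) hlS).1 hseq'⟩
    obtain ⟨z, hz, hzx⟩ := List.mem_map.1 ((hmem' (f x)).2 (Finset.mem_image_of_mem f hx))
    rwa [← hfS (hlS z hz) hx hzx]
  · rintro ⟨l, hnd, hmem, hseq'⟩
    refine ⟨l.map f, hnd.map_on fun x hx y hy => hfS ((hmem x).1 hx) ((hmem y).1 hy),
      fun y => by simp [hmem], (hseq hnd fun x => (hmem x).1).2 hseq'⟩

end Transfer

theorem hasType_image_iff {M N H : Type*} [DecidableEq (N × H)] {f : M × H → N × H}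
    (hf : ∀ x, (f x).2 = x.2) {S : Finset (M × H)} (hS : InjOn f S) (lam : H → ℕ) :
    HasType (S.image f) lam ↔ HasType S lam := by
  refine forall_congr' fun h => ?_
  have hfiber : {y ∈ (S.image f : Set (N × H)) | y.2 = h}
      = f '' {x ∈ (S : Set (M × H)) | x.2 = h} := by
    ext y
    simp only [Finset.coe_image, mem_ofPred_eq, mem_image]
    constructor
    · rintro ⟨⟨x, hx, rfl⟩, hxh⟩
      exact ⟨x, ⟨hx, hf x ▸ hxh⟩, rfl⟩
    · rintro ⟨x, ⟨hx, hxh⟩, rfl⟩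
      exact ⟨⟨x, hx, rfl⟩, (hf x).trans hxh⟩
  rw [hfiber, (hS.mono fun _ hx => hx.1).ncard_image]

section NonzeroSumOfType

variable {M N H : Type*} [AddCommGroup M] [AddCommGroup N] [AddCommGroup H]

def IsNonzeroSumOfType (S : Finset (M × H)) (lam : H → ℕ) : Prop :=
  (0 : M × H) ∉ S ∧ HasType S lam ∧ ∑ x ∈ S, x ≠ 0

theorem isNonzeroSumOfType_image_iff [DecidableEq (N × H)] {f : M × H →+ N × H}
    (hf : ∀ x, (f x).2 = x.2) {S : Finset (M × H)} (hS : InjOn f (subsetSums S)) (lam : H → ℕ) :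
    IsNonzeroSumOfType (S.image f) lam ↔ IsNonzeroSumOfType S lam := by
  have hfS : InjOn f S := hS.mono fun _ => mem_subsetSums_of_mem
  have hzero : (0 : N × H) ∈ S.image f ↔ (0 : M × H) ∈ S := by
    simp only [Finset.mem_image, ← map_zero f]
    exact ⟨fun ⟨x, hx, hx0⟩ => hS (mem_subsetSums_of_mem hx) (zero_mem_subsetSums S) hx0 ▸ hx,
      fun h => ⟨0, h, rfl⟩⟩
  have hsum : ∑ y ∈ S.image f, y = 0 ↔ ∑ x ∈ S, x = 0 := by
    rw [Finset.sum_image fun x hx y hy => hfS hx hy, ← map_sum, ← map_zero f]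
    exact hS.eq_iff (sum_mem_subsetSums S) (zero_mem_subsetSums S)
  rw [IsNonzeroSumOfType, IsNonzeroSumOfType, hzero, hasType_image_iff hf hfS, ne_eq, ne_eq, hsum]

theorem injOn_prodMap_subsetSums {g : M →+ N} {S : Finset (M × H)}
    (hg : InjOn g (Prod.fst '' subsetSums S)) :
    InjOn (g.prodMap (AddMonoidHom.id H)) (subsetSums S) := fun x hx y hy hxy =>
  Prod.ext (hg ⟨x, hx, rfl⟩ ⟨y, hy, rfl⟩ (Prod.ext_iff.1 hxy).1) (Prod.ext_iff.1 hxy).2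

end NonzeroSumOfType

section SeparatingFunctional

variable {R M : Type*} [CommRing R] [IsDomain R] [AddCommGroup M] [Module R M]
  [Module.Free R M] [Module.Finite R M]

theorem exists_linearMap_polynomial_injective : ∃ ψ : M →ₗ[R] R[X], Function.Injective ψ :=
  let e := (Module.finBasis R M).equivFun ≪≫ₗ (degreeLTEquiv R _).symm
  ⟨(degreeLT R _).subtype ∘ₗ e.toLinearMap, Subtype.val_injective.comp e.injective⟩

theorem exists_linearMap_injOn [Infinite R] {D : Set M} (hD : D.Finite) :
    ∃ φ : M →ₗ[R] R, InjOn φ D := by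
  obtain ⟨ψ, hψ⟩ := exists_linearMap_polynomial_injective (R := R) (M := M)
  set Q : R[X] := ∏ d ∈ hD.toFinset.offDiag, (ψ d.1 - ψ d.2)
  have hQ : Q ≠ 0 := Finset.prod_ne_zero_iff.2 fun d hd =>
    sub_ne_zero.2 (hψ.ne (Finset.mem_offDiag.1 hd).2.2)
  obtain ⟨c, hc⟩ : ∃ c, Q.eval c ≠ 0 := by
    by_contra! h
    exact hQ (zero_of_eval_zero Q h)
  refine ⟨leval c ∘ₗ ψ, fun d₁ h₁ d₂ h₂ heq => by_contra fun hne => ?_⟩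
  rw [eval_prod, Finset.prod_ne_zero_iff] at hc
  refine hc (d₁, d₂) (Finset.mem_offDiag.2 ⟨by simpa, by simpa, hne⟩) ?_
  simpa [sub_eq_zero] using heq

end SeparatingFunctional

theorem injOn_intCast_zmod {p : ℕ} {D : Set ℤ} (hD : ∀ d ∈ D, 2 * |d| < p) :
    InjOn (Int.cast : ℤ → ZMod p) D := by
  intro a ha b hb hab
  have hdvd : (p : ℤ) ∣ b - a := (ZMod.intCast_eq_intCast_iff_dvd_sub a b p).1 hab
  have hlt : |b - a| < p := by
    linarith [hD a ha, hD b hb, abs_sub b a]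
  linarith [Int.eq_zero_of_abs_lt_dvd hdvd hlt]

theorem exists_zmod_addMonoidHom_injOn {A : Type*} [AddCommGroup A] [Module.Free ℤ A]
    [Module.Finite ℤ A] {P : Set ℕ} (hP : P.Infinite) {D : Set A} (hD : D.Finite) :
    ∃ p ∈ P, ∃ Φ : A →+ ZMod p, InjOn Φ D := by
  obtain ⟨φ, hφ⟩ := exists_linearMap_injOn (R := ℤ) hD
  obtain ⟨B, hB⟩ := ((hD.image φ).image fun n : ℤ => 2 * |n|).bddAbove
  obtain ⟨p, hp, hBp⟩ := hP.exists_gt B.toNat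
  refine ⟨p, hp, (Int.castAddHom (ZMod p)).comp φ.toAddMonoidHom, ?_⟩
  refine (injOn_intCast_zmod fun n hn => ?_).comp hφ (mapsTo_image φ D)
  have : 2 * |n| ≤ B := hB ⟨n, hn, rfl⟩
  omega

theorem exists_finset_image_subtype_prodMap {G H : Type*} [AddCommGroup G] [AddCommGroup H]
    [DecidableEq (G × H)] (A : AddSubgroup G) {S : Finset (G × H)} (hS : ∀ x ∈ S, x.1 ∈ A) :
    ∃ T : Finset (A × H), T.image (A.subtype.prodMap (AddMonoidHom.id H)) = S := by
  obtain ⟨T, -, hT⟩ := (Finset.subset_set_image_iff (s := univ)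
    (f := A.subtype.prodMap (AddMonoidHom.id H))).1 fun x hx =>
    ⟨((⟨x.1, hS x hx⟩ : A), x.2), mem_univ _, rfl⟩
  exact ⟨T, hT⟩

theorem stmt_12_general (H : Type*) [AddCommGroup H] (lam : H → ℕ)
    (hyp : {p : ℕ | p.Prime ∧ ∀ S : Finset (ZMod p × H),
      (0 : ZMod p × H) ∉ S → HasType S lam → (∑ x ∈ S, x) ≠ 0 →
      Sequenceable S}.Infinite) :
    ∀ (G : Type) [AddCommGroup G], (∀ g : G, g ≠ 0 → ¬IsOfFinAddOrder g) →
      ∀ S : Finset (G × H), (0 : G × H) ∉ S → HasType S lam →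
        (∑ x ∈ S, x) ≠ 0 → Sequenceable S := by
  intro G _ hG S hS0 hS hsum
  classical
  have : IsAddTorsionFree G := .of_not_isOfFinAddOrder hG
  let A := AddSubgroup.closure (Prod.fst '' (S : Set (G × H)))
  have : Module.Finite ℤ A := Module.Finite.iff_addGroup_fg.2 <|
    (AddGroup.fg_iff_addSubgroup_fg A).2 ⟨S.image Prod.fst, by rw [Finset.coe_image]⟩
  obtain ⟨T, hTS⟩ := exists_finset_image_subtype_prodMap A fun x hx =>
    AddSubgroup.subset_closure ⟨x, hx, rfl⟩
  rw [← hTS] at hS0 hS hsum ⊢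
  have hι : InjOn (A.subtype.prodMap (AddMonoidHom.id H)) (subsetSums T) :=
    injOn_of_injective (Subtype.val_injective.prodMap Function.injective_id)
  have hT := (isNonzeroSumOfType_image_iff (fun _ => rfl) hι lam).1 ⟨hS0, hS, hsum⟩
  obtain ⟨p, ⟨-, hp⟩, Φ, hΦ⟩ :=
    exists_zmod_addMonoidHom_injOn hyp ((subsetSums_finite T).image Prod.fst)
  have hπ := injOn_prodMap_subsetSums hΦ
  obtain ⟨h0, htype, hne⟩ := (isNonzeroSumOfType_image_iff (fun _ => rfl) hπ lam).2 hT
  exact (sequenceable_image_iff hι).2 ((sequenceable_image_iff hπ).1 (hp _ h0 htype hne))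

/-- If for infinitely many primes p every non-zero-sum subset of
(ℤ_p × H) minus {0} of type lam is sequenceable, then so is every
non-zero-sum subset of (G × H) minus {0} of type lam, for every torsion-free
abelian group G. -/
theorem stmt_12 (H : Type*) [AddCommGroup H] [Fintype H] (lam : H → ℕ)
    (hyp : {p : ℕ | p.Prime ∧ ∀ S : Finset (ZMod p × H),
      (0 : ZMod p × H) ∉ S → HasType S lam → (∑ x ∈ S, x) ≠ 0 →
      Sequenceable S}.Infinite) :
    ∀ (G : Type) [AddCommGroup G], (∀ g : G, g ≠ 0 → ¬IsOfFinAddOrder g) →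
      ∀ S : Finset (G × H), (0 : G × H) ∉ S → HasType S lam →
        (∑ x ∈ S, x) ≠ 0 → Sequenceable S :=
  stmt_12_general H lam hyp
end

section
/- Let H be a finite abelian group and λ a type with k = λ_0 + ... + λ_{t−1}. Suppose that for infinitely many primes p, every non-zero-sum subset of (ℤ_p × H) \ {0} of type λ is sequenceable. Then there exists a positive integer N(λ) such that every non-zero-sum subset of (G × H) \ {0} of type λ is sequenceable, for every abelian group G with θ(G) > N(λ), where θ(G) = min{o(g) : g ∈ G, g ≠ 0} is the minimum order of a nonzero element. -/
open Finset

section IntegerFunctionals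

theorem exists_linearMap_int_forall_ne_zero {M : Type*} [AddCommGroup M] [Module.Free ℤ M]
    (F : Finset M) (hF : ∀ x ∈ F, x ≠ 0) : ∃ χ : M →ₗ[ℤ] ℤ, ∀ x ∈ F, χ x ≠ 0 := by
  classical
  induction F using Finset.induction_on with
  | empty => exact ⟨0, by simp⟩
  | @insert v F _ ih =>
    obtain ⟨χ, hχ⟩ := ih fun x hx => hF x (mem_insert_of_mem hx)
    obtain ⟨i, hi⟩ : ∃ i, (Module.Free.chooseBasis ℤ M).repr v i ≠ 0 := by
      by_contra! h
      exact hF v (mem_insert_self v F) ((Module.Free.chooseBasis ℤ M).repr.map_eq_zero_iff.mp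
        (Finsupp.ext h))
    set γ := (Module.Free.chooseBasis ℤ M).coord i
    set n : ℕ := (insert v F).sup (fun x => (χ x).natAbs) + 1
    have hlarge : ∀ x ∈ insert v F, γ x ≠ 0 → (n : ℤ) * γ x + χ x ≠ 0 := by
      intro x hx hγx hzero
      have hχx : (χ x).natAbs < n := Nat.lt_succ_of_le (le_sup (f := fun x => (χ x).natAbs) hx)
      have hdvd : n ∣ (χ x).natAbs :=
        Int.ofNat_dvd_left.mp ⟨-γ x, by linarith⟩
      have hχx0 : χ x = 0 := Int.natAbs_eq_zero.mp (Nat.eq_zero_of_dvd_of_lt hdvd hχx)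
      rw [hχx0, add_zero, mul_eq_zero] at hzero
      omega
    refine ⟨(n : ℤ) • γ + χ, fun x hx => ?_⟩
    rw [LinearMap.add_apply, LinearMap.smul_apply, smul_eq_mul]
    by_cases hγx : γ x = 0
    · rcases mem_insert.mp hx with rfl | hxF
      · exact absurd hγx hi
      · simpa [hγx] using hχ x hxF
    · exact hlarge x hx hγx

theorem exists_linearMap_int_le_ker_forall_ne_zero {M : Type*} [AddCommGroup M]
    [Module.Finite ℤ M] (N : Submodule ℤ M) (C : Finset M)
    (hC : ∀ c ∈ C, ∀ n : ℤ, n ≠ 0 → n • c ∉ N) :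
    ∃ ψ : M →ₗ[ℤ] ℤ, N ≤ LinearMap.ker ψ ∧ ∀ c ∈ C, ψ c ≠ 0 := by
  classical
  -- `M ⧸ N` modulo its torsion is finitely generated and torsion-free, hence free.
  set π := (Submodule.torsion ℤ (M ⧸ N)).mkQ ∘ₗ N.mkQ
  have hπ : ∀ c ∈ C, π c ≠ 0 := by
    rintro c hc hπc
    rw [LinearMap.comp_apply, Submodule.mkQ_apply, Submodule.Quotient.mk_eq_zero] at hπc
    obtain ⟨⟨n, hn⟩, hnc⟩ := hπc
    refine hC c hc n (nonZeroDivisors.ne_zero hn) ?_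
    rw [← Submodule.Quotient.mk_eq_zero, Submodule.Quotient.mk_smul]
    exact hnc
  obtain ⟨χ, hχ⟩ := exists_linearMap_int_forall_ne_zero (C.image π) (by simpa using hπ)
  refine ⟨χ ∘ₗ π, fun x hx => ?_, fun c hc => hχ _ (mem_image_of_mem π hc)⟩
  simp [π, (Submodule.Quotient.mk_eq_zero N).mpr hx]

end IntegerFunctionals

theorem Set.Infinite.exists_forall_intCast_zmod_ne_zero {P : Set ℕ} (hP : P.Infinite)
    (s : Finset ℤ) (hs : ∀ n ∈ s, n ≠ 0) : ∃ p ∈ P, ∀ n ∈ s, (n : ZMod p) ≠ 0 := by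
  obtain ⟨p, hpP, hp⟩ := hP.exists_gt (s.sup Int.natAbs)
  refine ⟨p, hpP, fun n hn hn0 => ?_⟩
  rw [ZMod.intCast_zmod_eq_zero_iff_dvd, Int.ofNat_dvd_left] at hn0
  have hle : p ≤ n.natAbs := Nat.le_of_dvd (Int.natAbs_pos.mpr (hs n hn)) hn0
  exact absurd (hle.trans (le_sup (f := Int.natAbs) hn)) hp.not_ge

section RelationBound

variable {ι : Type*}

/-- `sInf ∅ = 0` when no positive multiple of `c` lies in the span of `V`. -/
noncomputable def leastMultipleInSpan (V : Finset (ι → ℤ)) (c : ι → ℤ) : ℕ :=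
  sInf {m : ℕ | 0 < m ∧ (m : ℤ) • c ∈ Submodule.span ℤ (V : Set (ι → ℤ))}

noncomputable def relationBound (F : Finset (ι → ℤ)) : ℕ :=
  F.powerset.sup fun V => F.sup (leastMultipleInSpan V)

theorem exists_smul_mem_span_le_relationBound {F V : Finset (ι → ℤ)} (hV : V ⊆ F)
    {c : ι → ℤ} (hc : c ∈ F) {m : ℕ} (hm : 0 < m)
    (hmc : (m : ℤ) • c ∈ Submodule.span ℤ (V : Set (ι → ℤ))) :
    ∃ m₀, 0 < m₀ ∧ m₀ ≤ relationBound F ∧ (m₀ : ℤ) • c ∈ Submodule.span ℤ (V : Set (ι → ℤ)) := by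
  obtain ⟨hpos, hmem⟩ : leastMultipleInSpan V c ∈
      {m : ℕ | 0 < m ∧ (m : ℤ) • c ∈ Submodule.span ℤ (V : Set (ι → ℤ))} :=
    Nat.sInf_mem ⟨m, hm, hmc⟩
  refine ⟨leastMultipleInSpan V c, hpos, ?_, hmem⟩
  calc leastMultipleInSpan V c ≤ F.sup (leastMultipleInSpan V) := le_sup hc
    _ ≤ relationBound F :=
      le_sup (f := fun V => F.sup (leastMultipleInSpan V)) (mem_powerset.mpr hV)

variable {G : Type*} [AddCommGroup G] {F : Finset (ι → ℤ)}

theorem not_smul_mem_span_of_relationBound_lt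
    (hG : ∀ g : G, g ≠ 0 → addOrderOf g = 0 ∨ relationBound F < addOrderOf g)
    (L : (ι → ℤ) →ₗ[ℤ] G) {V : Finset (ι → ℤ)} (hV : V ⊆ F) (hVL : ∀ v ∈ V, L v = 0)
    {c : ι → ℤ} (hc : c ∈ F) (hLc : L c ≠ 0) {n : ℤ} (hn : n ≠ 0) :
    n • c ∉ Submodule.span ℤ (V : Set (ι → ℤ)) := by
  intro hnc
  have hspan : Submodule.span ℤ (V : Set (ι → ℤ)) ≤ LinearMap.ker L :=
    Submodule.span_le.mpr hVL
  have hnatAbs : (n.natAbs : ℤ) • c ∈ Submodule.span ℤ (V : Set (ι → ℤ)) := by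
    rcases Int.natAbs_eq n with h | h
    · rwa [← h]
    · rw [h, neg_smul, neg_mem_iff] at hnc
      exact hnc
  obtain ⟨m₀, hm₀, hm₀F, hm₀c⟩ :=
    exists_smul_mem_span_le_relationBound hV hc (Int.natAbs_pos.mpr hn) hnatAbs
  have hkill : m₀ • L c = 0 := by
    have := hspan hm₀c
    rwa [LinearMap.mem_ker, map_smul, natCast_zsmul] at this
  have hfin : IsOfFinAddOrder (L c) := isOfFinAddOrder_iff_nsmul_eq_zero.mpr ⟨m₀, hm₀, hkill⟩
  have hle := addOrderOf_le_of_nsmul_eq_zero hm₀ hkill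
  rcases hG (L c) hLc with h0 | hlt
  · exact hfin.addOrderOf_pos.ne' h0
  · omega

theorem exists_zmod_forall_sum_smul_eq_zero_iff [Fintype ι] {P : Set ℕ} (hP : P.Infinite)
    (hG : ∀ g : G, g ≠ 0 → addOrderOf g = 0 ∨ relationBound F < addOrderOf g) (a : ι → G) :
    ∃ p ∈ P, ∃ b : ι → ZMod p, ∀ c ∈ F, (∑ i, c i • a i = 0 ↔ ∑ i, c i • b i = 0) := by
  classical
  set L := Fintype.linearCombination ℤ a
  set V := F.filter (L · = 0)
  set C := F.filter (L · ≠ 0)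
  obtain ⟨ψ, hψV, hψC⟩ := exists_linearMap_int_le_ker_forall_ne_zero
    (Submodule.span ℤ (V : Set (ι → ℤ))) C fun c hc n hn =>
      not_smul_mem_span_of_relationBound_lt hG L (filter_subset _ F)
        (fun v hv => (mem_filter.mp hv).2) (mem_filter.mp hc).1 (mem_filter.mp hc).2 hn
  obtain ⟨p, hpP, hp⟩ := hP.exists_forall_intCast_zmod_ne_zero (C.image ψ) (by simpa using hψC)
  set φ : (ι → ℤ) →ₗ[ℤ] ZMod p := (Int.castAddHom (ZMod p)).toIntLinearMap ∘ₗ ψ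
  refine ⟨p, hpP, fun i => φ (Pi.single i 1), fun c hc => ?_⟩
  have hφ : ∑ i, c i • φ (Pi.single i 1) = φ c := by
    simp_rw [← map_zsmul, ← map_sum]
    congr 1
    ext j
    simp [Pi.single_apply]
  rw [hφ, ← Fintype.linearCombination_apply]
  by_cases hLc : L c = 0
  · have hψc : ψ c = 0 := hψV (Submodule.subset_span (mem_filter.mpr ⟨hc, hLc⟩))
    exact iff_of_true hLc (by simp [φ, hψc])
  · exact iff_of_false hLc (hp _ (mem_image_of_mem ψ (mem_filter.mpr ⟨hc, hLc⟩)))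

end RelationBound

def signVectors (ι : Type*) [Fintype ι] [DecidableEq ι] : Finset (ι → ℤ) :=
  Fintype.piFinset fun _ => {-1, 0, 1}

section Sequencings

variable {G : Type*} [AddCommGroup G]

theorem isLinSeq_iff {l : List G} : IsLinSeq l ↔
    ∀ m ≤ l.length, ∀ n ≤ l.length, (l.take m).sum = (l.take n).sum → m = n := by
  simp [IsLinSeq, Function.Injective, Fin.forall_iff, Fin.ext_iff]

theorem isRotSeq_iff_s13 {l : List G} : IsRotSeq l ↔ l ≠ [] ∧ l.sum = 0 ∧
    ∀ m < l.length, ∀ n < l.length, (l.take m).sum = (l.take n).sum → m = n := by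
  simp [IsRotSeq, Function.Injective, Fin.forall_iff, Fin.ext_iff]

end Sequencings

def SameSubsetSums {ι A B : Type*} [AddCommMonoid A] [AddCommMonoid B] (a : ι → A)
    (f : ι → B) : Prop :=
  ∀ T U : Finset ι, ∑ i ∈ T, a i = ∑ i ∈ U, a i ↔ ∑ i ∈ T, f i = ∑ i ∈ U, f i

namespace SameSubsetSums

variable {ι A B : Type*}

section AddCommMonoid

variable [AddCommMonoid A] [AddCommMonoid B] {a : ι → A} {f : ι → B}

theorem prodMk {C : Type*} [AddCommMonoid C] (h : SameSubsetSums a f) (z : ι → C) :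
    SameSubsetSums (fun i => (a i, z i)) (fun i => (f i, z i)) := by
  intro T U
  simp only [Prod.ext_iff, Prod.fst_sum, Prod.snd_sum, h T U]

theorem sum_eq_zero_iff (h : SameSubsetSums a f) (T : Finset ι) :
    ∑ i ∈ T, a i = 0 ↔ ∑ i ∈ T, f i = 0 := by
  simpa using h T ∅

theorem apply_eq_zero_iff (h : SameSubsetSums a f) (i : ι) : a i = 0 ↔ f i = 0 := by
  simpa using h.sum_eq_zero_iff {i}

theorem apply_eq_apply_iff (h : SameSubsetSums a f) (i j : ι) : a i = a j ↔ f i = f j := by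
  simpa using h {i} {j}

theorem injective_iff (h : SameSubsetSums a f) : Function.Injective a ↔ Function.Injective f :=
  forall₂_congr fun i j => imp_congr_left (h.apply_eq_apply_iff i j)

theorem sum_take_map_eq_iff (h : SameSubsetSums a f) {J : List ι} (hJ : J.Nodup) (m n : ℕ) :
    ((J.map a).take m).sum = ((J.map a).take n).sum ↔
      ((J.map f).take m).sum = ((J.map f).take n).sum := by
  classical
  simp only [← List.map_take, ← List.sum_toFinset _ (hJ.sublist (J.take_sublist _))]
  exact h _ _

end AddCommMonoid

section AddCommGroup

variable [AddCommGroup A] [AddCommGroup B] {a : ι → A} {f : ι → B}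

theorem of_signVectors [Fintype ι] [DecidableEq ι]
    (h : ∀ c ∈ signVectors ι, (∑ i, c i • a i = 0 ↔ ∑ i, c i • f i = 0)) :
    SameSubsetSums a f := by
  intro T U
  set c : ι → ℤ := fun i => (if i ∈ T then 1 else 0) - (if i ∈ U then 1 else 0)
  have hc : c ∈ signVectors ι := by
    simp only [signVectors, Fintype.mem_piFinset, c]
    intro i
    split_ifs <;> simp
  simpa only [c, sub_smul, sum_sub_distrib, ite_smul, one_smul, zero_smul, sum_ite_mem,
    univ_inter, sub_eq_zero] using h c hc

theorem isLinSeq_map_iff (h : SameSubsetSums a f) {J : List ι} (hJ : J.Nodup) :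
    IsLinSeq (J.map a) ↔ IsLinSeq (J.map f) := by
  simp only [isLinSeq_iff, List.length_map, h.sum_take_map_eq_iff hJ]

theorem isRotSeq_map_iff (h : SameSubsetSums a f) {J : List ι} (hJ : J.Nodup) :
    IsRotSeq (J.map a) ↔ IsRotSeq (J.map f) := by
  have hsum : (J.map a).sum = 0 ↔ (J.map f).sum = 0 := by
    simpa [List.take_of_length_le] using h.sum_take_map_eq_iff hJ J.length 0
  simp only [isRotSeq_iff_s13, List.length_map, ne_eq, List.map_eq_nil_iff, hsum,
    h.sum_take_map_eq_iff hJ]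

theorem sequenceable_image [Fintype ι] [DecidableEq A] [DecidableEq B]
    (h : SameSubsetSums a f) (hf : Sequenceable (univ.image f)) :
    Sequenceable (univ.image a) := by
  obtain ⟨l, hl, hlS, hseq⟩ := hf
  obtain ⟨J, rfl⟩ : l ∈ Set.range (List.map f) := by
    rw [Set.range_list_map]
    intro x hx
    simpa using (hlS x).mp hx
  have hJ : J.Nodup := hl.of_map f
  have hJa : (J.map a).Nodup := hJ.map_on fun i hi j hj hij =>
    List.inj_on_of_nodup_map hl hi hj ((h.apply_eq_apply_iff i j).mp hij)
  refine ⟨J.map a, hJa, fun x => ?_, ((h.isLinSeq_map_iff hJ).or (h.isRotSeq_map_iff hJ)).mpr hseq⟩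
  simp only [List.mem_map, mem_image, mem_univ, true_and]
  refine ⟨fun ⟨i, _, hi⟩ => ⟨i, hi⟩, ?_⟩
  rintro ⟨i, rfl⟩
  obtain ⟨j, hj, hji⟩ := List.mem_map.mp ((hlS (f i)).mpr (by simp))
  exact ⟨j, hj, (h.apply_eq_apply_iff j i).mpr hji⟩

end AddCommGroup

end SameSubsetSums

section TypeOfSubset

variable {G H : Type*} {lam : H → ℕ}

theorem hasType_iff_card_filter [DecidableEq H] {S : Finset (G × H)} :
    HasType S lam ↔ ∀ h, (S.filter (·.2 = h)).card = lam h := by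
  simp only [HasType, ← Set.ncard_coe_finset, coe_filter, mem_coe]

theorem HasType.card_eq [Fintype H] {S : Finset (G × H)} (hS : HasType S lam) :
    S.card = ∑ h, lam h := by
  classical
  rw [card_eq_sum_card_fiberwise fun x _ => mem_univ (Prod.snd x)]
  exact sum_congr rfl fun h _ => hasType_iff_card_filter.mp hS h

theorem HasType.image_of_snd_eq {ι G' : Type*} [Fintype ι] [DecidableEq (G × H)]
    [DecidableEq (G' × H)] {a : ι → G × H} {a' : ι → G' × H} (ha : Function.Injective a)
    (ha' : Function.Injective a') (hsnd : ∀ i, (a' i).2 = (a i).2)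
    (hS : HasType (univ.image a) lam) : HasType (univ.image a') lam := by
  classical
  rw [hasType_iff_card_filter] at hS ⊢
  intro h
  rw [filter_image, card_image_of_injective _ ha', ← hS h, filter_image,
    card_image_of_injective _ ha]
  simp only [hsnd]

end TypeOfSubset

theorem Finset.exists_injective_image_univ_eq {α : Type*} [DecidableEq α] (S : Finset α) {k : ℕ}
    (hk : S.card = k) : ∃ a : Fin k → α, Function.Injective a ∧ univ.image a = S := by
  subst hk
  refine ⟨fun i => S.equivFin.symm i, fun i j hij => S.equivFin.symm.injective (Subtype.ext hij),
    ?_⟩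
  ext x
  simp only [mem_image, mem_univ, true_and]
  exact ⟨fun ⟨i, hi⟩ => hi ▸ (S.equivFin.symm i).2, fun hx => ⟨S.equivFin ⟨x, hx⟩, by simp⟩⟩

/-- If for infinitely many primes p every non-zero-sum subset of
(ℤ_p × H) minus {0} of type lam is sequenceable, then there is N such that the
same holds in G × H for every abelian group G all of whose nonzero elements
have order (possibly infinite) exceeding N. -/
theorem stmt_13 (H : Type*) [AddCommGroup H] [Fintype H] (lam : H → ℕ)
    (hyp : {p : ℕ | p.Prime ∧ ∀ S : Finset (ZMod p × H),
      (0 : ZMod p × H) ∉ S → HasType S lam → (∑ x ∈ S, x) ≠ 0 →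
      Sequenceable S}.Infinite) :
    ∃ N : ℕ, 0 < N ∧ ∀ (G : Type) [AddCommGroup G],
      (∀ g : G, g ≠ 0 → addOrderOf g = 0 ∨ N < addOrderOf g) →
      ∀ S : Finset (G × H), (0 : G × H) ∉ S → HasType S lam →
        (∑ x ∈ S, x) ≠ 0 → Sequenceable S := by
  classical
  set k := ∑ h, lam h
  refine ⟨relationBound (signVectors (Fin k)) + 1, Nat.succ_pos _, fun G _ hG S hS0 hS hsum => ?_⟩
  obtain ⟨a, ha, rfl⟩ := S.exists_injective_image_univ_eq hS.card_eq
  obtain ⟨p, ⟨-, hp⟩, b, hb⟩ := exists_zmod_forall_sum_smul_eq_zero_iff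
    (F := signVectors (Fin k)) hyp (fun g hg => (hG g hg).imp_right Nat.lt_of_succ_lt)
    fun i => (a i).1
  set f : Fin k → ZMod p × H := fun i => (b i, (a i).2)
  have haf : SameSubsetSums a f := (SameSubsetSums.of_signVectors hb).prodMk fun i => (a i).2
  have hf : Function.Injective f := haf.injective_iff.mp ha
  refine haf.sequenceable_image (hp _ ?_ (hS.image_of_snd_eq ha hf fun _ => rfl) ?_)
  · simpa [haf.apply_eq_zero_iff] using hS0
  · rw [sum_image fun i _ j _ hij => ha hij] at hsum
    rw [sum_image fun i _ j _ hij => hf hij]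
    exact (haf.sum_eq_zero_iff univ).not.mp hsum
end
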